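/- For every ℓ̄ > 0, the minimum over ϑ ∈ ℝ of L̄_O(ℓ̄, ϑ) equals ℓ̄/√(1 + ℓ̄), and this minimum is attained at ϑ = ℓ̄. -/

import Mathlib

/-- The 2×2 pivot matrix M(ℓ,ϑ,c,s) = A − B with A = diag(ℓ,0), B = ϑ·[[c²,cs],[cs,s²]]. -/
noncomputable def pivotM (l θ c s : ℝ) : Matrix (Fin 2) (Fin 2) ℝ :=
  !![l - θ * c ^ 2, -(θ * c * s); -(θ * c * s), -(θ * s ^ 2)]

/-- Frobenius norm: square root of the sum of squares of the entries. -/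
noncomputable def frobNorm (A : Matrix (Fin 2) (Fin 2) ℝ) : ℝ :=
  Real.sqrt (∑ i, ∑ j, (A i j) ^ 2)

/-- Operator norm: the ℓ²→ℓ² operator norm, i.e. the largest singular value. -/
noncomputable def opNorm (A : Matrix (Fin 2) (Fin 2) ℝ) : ℝ :=
  ‖LinearMap.toContinuousLinearMap (Matrix.toEuclideanLin A)‖

/-- Nuclear norm: the trace of √(AᴴA), i.e. the sum of the singular values. -/
noncomputable def nucNorm (A : Matrix (Fin 2) (Fin 2) ℝ) : ℝ :=
  ((Matrix.posSemidef_conjTranspose_mul_self A).isHermitian.eigenvectorUnitary.1 *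
    Matrix.diagonal (fun i => Real.sqrt
      ((Matrix.posSemidef_conjTranspose_mul_self A).isHermitian.eigenvalues i)) *
    (star (Matrix.posSemidef_conjTranspose_mul_self A).isHermitian.eigenvectorUnitary :
      Matrix (Fin 2) (Fin 2) ℝ)).trace

/-- Limiting cosine c̄(ℓ̄) in the γ → ∞ disproportional framework. -/
noncomputable def cBar (l : ℝ) : ℝ := Real.sqrt (l / (1 + l))

/-- Limiting sine s̄(ℓ̄) = √(1/(1+ℓ̄)). -/
noncomputable def sBar (l : ℝ) : ℝ := Real.sqrt (1 / (1 + l))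

/-- Asymptotic Frobenius loss L̄_F(ℓ̄, ϑ). -/
noncomputable def lossBarF (l θ : ℝ) : ℝ := frobNorm (pivotM l θ (cBar l) (sBar l))

/-- Asymptotic operator-norm loss L̄_O(ℓ̄, ϑ). -/
noncomputable def lossBarO (l θ : ℝ) : ℝ := opNorm (pivotM l θ (cBar l) (sBar l))

/-- Asymptotic nuclear-norm loss L̄_N(ℓ̄, ϑ). -/
noncomputable def lossBarN (l θ : ℝ) : ℝ := nucNorm (pivotM l θ (cBar l) (sBar l))

lemma normTx (A : Matrix (Fin 2) (Fin 2) ℝ) (x : EuclideanSpace ℝ (Fin 2)) :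
    ‖(LinearMap.toContinuousLinearMap (Matrix.toEuclideanLin A)) x‖
      = Real.sqrt ((A 0 0 * x 0 + A 0 1 * x 1) ^ 2 + (A 1 0 * x 0 + A 1 1 * x 1) ^ 2) := by
  rw [LinearMap.coe_toContinuousLinearMap', Matrix.toEuclideanLin_apply,
    EuclideanSpace.norm_eq]
  congr 1
  simp [Fin.sum_univ_two, Matrix.mulVec, dotProduct, sq_abs]

lemma normx (x : EuclideanSpace ℝ (Fin 2)) : ‖x‖ = Real.sqrt ((x 0) ^ 2 + (x 1) ^ 2) := by
  rw [EuclideanSpace.norm_eq]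
  simp [Fin.sum_univ_two, sq_abs]

lemma cs_facts (l : ℝ) (hl : 0 < l) :
    (cBar l) ^ 2 + (sBar l) ^ 2 = 1 ∧ 0 ≤ sBar l ∧ 0 ≤ cBar l ∧
    l * sBar l = l / Real.sqrt (1 + l) := by
  have hL : (0:ℝ) < 1 + l := by linarith
  have hc : (cBar l) ^ 2 = l / (1 + l) := Real.sq_sqrt (by positivity)
  have hs : (sBar l) ^ 2 = 1 / (1 + l) := Real.sq_sqrt (by positivity)
  refine ⟨by rw [hc, hs]; field_simp; ring, Real.sqrt_nonneg _, Real.sqrt_nonneg _, ?_⟩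
  rw [sBar, one_div, Real.sqrt_inv]
  ring

lemma lossBarO_ge (l θ : ℝ) (hl : 0 < l) :
    l / Real.sqrt (1 + l) ≤ lossBarO l θ := by
  obtain ⟨h1, hs0, hc0, hls⟩ := cs_facts l hl
  set c := cBar l; set s := sBar l
  set T := LinearMap.toContinuousLinearMap (Matrix.toEuclideanLin (pivotM l θ c s))
  set v : EuclideanSpace ℝ (Fin 2) := (WithLp.equiv 2 (Fin 2 → ℝ)).symm ![s, -c]
  have hv0 : v 0 = s := rfl
  have hv1 : v 1 = -c := rfl
  have hvnorm : ‖v‖ = 1 := by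
    rw [normx, hv0, hv1]
    rw [show s ^ 2 + (-c) ^ 2 = (1:ℝ) by nlinarith]
    exact Real.sqrt_one
  have hTv : ‖T v‖ = l * s := by
    rw [normTx, hv0, hv1]
    have e00 : pivotM l θ c s 0 0 = l - θ * c ^ 2 := rfl
    have e01 : pivotM l θ c s 0 1 = -(θ * c * s) := rfl
    have e10 : pivotM l θ c s 1 0 = -(θ * c * s) := rfl
    have e11 : pivotM l θ c s 1 1 = -(θ * s ^ 2) := rfl
    rw [e00, e01, e10, e11]
    rw [show ((l - θ * c ^ 2) * s + -(θ * c * s) * (-c)) ^ 2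
        + (-(θ * c * s) * s + -(θ * s ^ 2) * (-c)) ^ 2 = (l * s) ^ 2 by ring]
    exact Real.sqrt_sq (by positivity)
  have := T.le_opNorm v
  rw [hTv, hvnorm, mul_one] at this
  rw [← hls]
  exact this

lemma lossBarO_at (l : ℝ) (hl : 0 < l) :
    lossBarO l l = l / Real.sqrt (1 + l) := by
  obtain ⟨h1, hs0, hc0, hls⟩ := cs_facts l hl
  set c := cBar l; set s := sBar l
  refine le_antisymm ?_ (lossBarO_ge l l hl)
  rw [← hls]
  refine ContinuousLinearMap.opNorm_le_bound _ (by positivity) fun x => ?_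
  rw [normTx, normx]
  have e00 : pivotM l l c s 0 0 = l - l * c ^ 2 := rfl
  have e01 : pivotM l l c s 0 1 = -(l * c * s) := rfl
  have e10 : pivotM l l c s 1 0 = -(l * c * s) := rfl
  have e11 : pivotM l l c s 1 1 = -(l * s ^ 2) := rfl
  rw [e00, e01, e10, e11]
  rw [show ((l - l * c ^ 2) * x 0 + -(l * c * s) * x 1) ^ 2
      + (-(l * c * s) * x 0 + -(l * s ^ 2) * x 1) ^ 2
      = (l * s) ^ 2 * (x 0 ^ 2 + x 1 ^ 2) by linear_combination (l^2 * (c^2 - 1) * (x 0)^2 + 2 * l^2 * c * s * (x 0) * (x 1) + l^2 * s^2 * (x 1)^2) * h1]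
  rw [Real.sqrt_mul (sq_nonneg _), Real.sqrt_sq (by positivity)]

theorem optimal_operator_shrinker_bar (l : ℝ) (hl : 0 < l) :
    IsLeast (Set.range (lossBarO l)) (l / Real.sqrt (1 + l)) ∧
    lossBarO l l = l / Real.sqrt (1 + l) := by
  refine ⟨⟨⟨l, lossBarO_at l hl⟩, ?_⟩, lossBarO_at l hl⟩
  rintro x ⟨θ, rfl⟩
  exact lossBarO_ge l θ hl
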